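/- Let K be an isolated non-saddle compact invariant set. A point x ∉ K is dissonant if and only if x lies in the topological boundary of H(K). Consequently, the closure of H(K) equals H(K) ∪ D, where D is the set of dissonant points. -/

import Mathlib

open Set Filter Topology

variable {M : Type*}

/-- The positive semi-trajectory `γ⁺(x)`. -/
def posOrbit [TopologicalSpace M] (φ : Flow ℝ M) (x : M) : Set M :=
  {y | ∃ t : ℝ, 0 ≤ t ∧ φ t x = y}

/-- The negative semi-trajectory `γ⁻(x)`. -/
def negOrbit [TopologicalSpace M] (φ : Flow ℝ M) (x : M) : Set M :=
  {y | ∃ t : ℝ, t ≤ 0 ∧ φ t x = y}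

/-- The omega-limit set `ω(x) = ⋂_{t>0} closure (x·[t,∞))`. -/
def omegaLim [TopologicalSpace M] (φ : Flow ℝ M) (x : M) : Set M :=
  ⋂ t ∈ Set.Ioi (0:ℝ), closure {y | ∃ s : ℝ, t ≤ s ∧ φ s x = y}

/-- The negative omega-limit set `ω*(x) = ⋂_{t<0} closure (x·(-∞,t])`. -/
def alphaLim [TopologicalSpace M] (φ : Flow ℝ M) (x : M) : Set M :=
  ⋂ t ∈ Set.Iio (0:ℝ), closure {y | ∃ s : ℝ, s ≤ t ∧ φ s x = y}

/-- `K` is invariant under the flow. -/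
def FlowInvariant [TopologicalSpace M] (φ : Flow ℝ M) (K : Set M) : Prop :=
  ∀ x ∈ K, ∀ t : ℝ, φ t x ∈ K

/-- `K` is a compact invariant set which is the maximal invariant subset of some
compact neighborhood (an isolated invariant compactum). -/
def IsIsolatedInv [TopologicalSpace M] (φ : Flow ℝ M) (K : Set M) : Prop :=
  IsCompact K ∧ FlowInvariant φ K ∧
    ∃ N : Set M, IsCompact N ∧ K ⊆ interior N ∧
      ∀ x ∈ N, (∀ t : ℝ, φ t x ∈ N) → x ∈ K

/-- `K` is saddle: it admits a neighborhood `U` such that every neighborhood `V` of `K`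
contains a point whose positive and negative semi-trajectories both leave `U`. -/
def Saddle [TopologicalSpace M] (φ : Flow ℝ M) (K : Set M) : Prop :=
  ∃ U : Set M, K ⊆ interior U ∧ ∀ V : Set M, K ⊆ interior V →
    ∃ x ∈ V, ¬ posOrbit φ x ⊆ U ∧ ¬ negOrbit φ x ⊆ U

/-- `K` is non-saddle: every neighborhood `U` of `K` contains a neighborhood `V` of `K`
such that every point of `V` has `γ⁺(x) ⊆ U` or `γ⁻(x) ⊆ U`. -/
def NonSaddle [TopologicalSpace M] (φ : Flow ℝ M) (K : Set M) : Prop :=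
  ∀ U : Set M, K ⊆ interior U → ∃ V : Set M, K ⊆ interior V ∧ V ⊆ U ∧
    ∀ x ∈ V, posOrbit φ x ⊆ U ∨ negOrbit φ x ⊆ U

/-- The stable manifold (region of attraction) `A(K)`. -/
def Aset [TopologicalSpace M] (φ : Flow ℝ M) (K : Set M) : Set M :=
  {x | (omegaLim φ x).Nonempty ∧ omegaLim φ x ⊆ K}

/-- The unstable manifold (region of repulsion) `R(K)`. -/
def Rset [TopologicalSpace M] (φ : Flow ℝ M) (K : Set M) : Set M :=
  {x | (alphaLim φ x).Nonempty ∧ alphaLim φ x ⊆ K}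

/-- The region of influence `I(K) = A(K) ∪ R(K)`. -/
def Iset [TopologicalSpace M] (φ : Flow ℝ M) (K : Set M) : Set M :=
  Aset φ K ∪ Rset φ K

/-- `H(K) = A(K) ∩ R(K)`. -/
def Hset [TopologicalSpace M] (φ : Flow ℝ M) (K : Set M) : Set M :=
  Aset φ K ∩ Rset φ K

/-- The positive prolongational limit set `J⁺(x)`. -/
def Jplus [TopologicalSpace M] (φ : Flow ℝ M) (x : M) : Set M :=
  {y | ∃ (xs : ℕ → M) (ts : ℕ → ℝ), Tendsto xs atTop (𝓝 x) ∧
    Tendsto ts atTop atTop ∧ Tendsto (fun n => φ (ts n) (xs n)) atTop (𝓝 y)}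

/-- The negative prolongational limit set `J⁻(x)`. -/
def Jminus [TopologicalSpace M] (φ : Flow ℝ M) (x : M) : Set M :=
  {y | ∃ (xs : ℕ → M) (ts : ℕ → ℝ), Tendsto xs atTop (𝓝 x) ∧
    Tendsto ts atTop atBot ∧ Tendsto (fun n => φ (ts n) (xs n)) atTop (𝓝 y)}

/-- The two-sided prolongational limit set `J*(x)`. -/
def Jstar [TopologicalSpace M] (φ : Flow ℝ M) (x : M) : Set (M × M) :=
  {p | ∃ (xs : ℕ → M) (ts ss : ℕ → ℝ), Tendsto xs atTop (𝓝 x) ∧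
    Tendsto ts atTop atTop ∧ Tendsto ss atTop atBot ∧
    Tendsto (fun n => φ (ts n) (xs n)) atTop (𝓝 p.1) ∧
    Tendsto (fun n => φ (ss n) (xs n)) atTop (𝓝 p.2)}

/-- `x ∈ I(K)` is positively dissonant. -/
def PosDissonant [TopologicalSpace M] (φ : Flow ℝ M) (K : Set M) (x : M) : Prop :=
  x ∈ Iset φ K ∧ x ∉ Aset φ K ∧ (Jplus φ x ∩ K).Nonempty

/-- `x ∈ I(K)` is negatively dissonant. -/
def NegDissonant [TopologicalSpace M] (φ : Flow ℝ M) (K : Set M) (x : M) : Prop :=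
  x ∈ Iset φ K ∧ x ∉ Rset φ K ∧ (Jminus φ x ∩ K).Nonempty

/-- `x ∉ I(K)` is externally dissonant. -/
def ExtDissonant [TopologicalSpace M] (φ : Flow ℝ M) (K : Set M) (x : M) : Prop :=
  x ∉ Iset φ K ∧ (Jstar φ x ∩ K ×ˢ K).Nonempty

/-- `x` is a dissonant point of `K`. -/
def Dissonant [TopologicalSpace M] (φ : Flow ℝ M) (K : Set M) (x : M) : Prop :=
  PosDissonant φ K x ∨ NegDissonant φ K x ∨ ExtDissonant φ K x

/-- `N` is an isolating block for `K` with entrance set `Ni` and exit set `No`. -/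
structure IsolatingBlock [TopologicalSpace M] (φ : Flow ℝ M) (K N Ni No : Set M) : Prop where
  compact_N : IsCompact N
  nbhd : K ⊆ interior N
  maximal : ∀ x ∈ N, (∀ t : ℝ, φ t x ∈ N) → x ∈ K
  compact_Ni : IsCompact Ni
  compact_No : IsCompact No
  Ni_sub : Ni ⊆ frontier N
  No_sub : No ⊆ frontier N
  cover : frontier N = Ni ∪ No
  entrance : ∀ x ∈ Ni, ∃ ε > (0:ℝ), ∀ t ∈ Set.Ico (-ε) (0:ℝ), φ t x ∉ N
  exitSet : ∀ x ∈ No, ∃ δ > (0:ℝ), ∀ t ∈ Set.Ioc (0:ℝ) δ, φ t x ∉ N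
  tang_neg : ∀ x ∈ frontier N \ Ni, ∃ ε > (0:ℝ), ∀ t ∈ Set.Ico (-ε) (0:ℝ), φ t x ∈ interior N
  tang_pos : ∀ x ∈ frontier N \ No, ∃ δ > (0:ℝ), ∀ t ∈ Set.Ioc (0:ℝ) δ, φ t x ∈ interior N

/-- `p` is strongly influenced by `K`. -/
def StronglyInfluenced [TopologicalSpace M] (φ : Flow ℝ M) (K : Set M) (p : M) : Prop :=
  ∃ U ∈ 𝓝 p, ∀ V : Set M, K ⊆ interior V → ∃ T : ℝ, 0 ≤ T ∧ ∀ x ∈ U,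
    (∀ t : ℝ, T ≤ t → φ t x ∈ V) ∨ (∀ t : ℝ, t ≤ -T → φ t x ∈ V)

/-- `p` is strongly attracted by `K`. -/
def StronglyAttracted [TopologicalSpace M] (φ : Flow ℝ M) (K : Set M) (p : M) : Prop :=
  ∃ U ∈ 𝓝 p, ∀ V : Set M, K ⊆ interior V → ∃ T : ℝ, 0 ≤ T ∧ ∀ x ∈ U,
    ∀ t : ℝ, T ≤ t → φ t x ∈ V

/-- `p` is strongly repelled by `K`. -/
def StronglyRepelled [TopologicalSpace M] (φ : Flow ℝ M) (K : Set M) (p : M) : Prop :=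
  ∃ U ∈ 𝓝 p, ∀ V : Set M, K ⊆ interior V → ∃ T : ℝ, 0 ≤ T ∧ ∀ x ∈ U,
    ∀ t : ℝ, t ≤ -T → φ t x ∈ V

/-- `K` is (positively) stable. -/
def IsStable [TopologicalSpace M] (φ : Flow ℝ M) (K : Set M) : Prop :=
  ∀ U : Set M, K ⊆ interior U → ∃ V : Set M, K ⊆ interior V ∧ V ⊆ U ∧
    ∀ x ∈ V, ∀ t : ℝ, 0 ≤ t → φ t x ∈ V

/-- `K` is negatively stable. -/
def IsNegStable [TopologicalSpace M] (φ : Flow ℝ M) (K : Set M) : Prop :=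
  ∀ U : Set M, K ⊆ interior U → ∃ V : Set M, K ⊆ interior V ∧ V ⊆ U ∧
    ∀ x ∈ V, ∀ t : ℝ, t ≤ 0 → φ t x ∈ V

/-- `K` is an attractor: stable and attracting some neighborhood. -/
def IsAttractor [TopologicalSpace M] (φ : Flow ℝ M) (K : Set M) : Prop :=
  IsStable φ K ∧ ∃ W : Set M, K ⊆ interior W ∧ W ⊆ Aset φ K

/-- `K` is a repeller: negatively stable and repelling some neighborhood. -/
def IsRepeller [TopologicalSpace M] (φ : Flow ℝ M) (K : Set M) : Prop :=
  IsNegStable φ K ∧ ∃ W : Set M, K ⊆ interior W ∧ W ⊆ Rset φ K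

/-! Fix `x ∉ K`. Take a compact neighbourhood `U` of `K` inside the isolating neighbourhood
that misses a neighbourhood of `x`, and let `V` be the neighbourhood of `K` that
non-saddleness gives for `U`. If `y ∉ U` and `φ t y ∈ V` with `t ≥ 0`, the negative
semi-orbit of `φ t y` contains `y`, so the positive one stays in `U` and `y ∈ A(K)`; time
reversal gives the same for `R(K)`. Hence `A(K) \ K` and `R(K) \ K` are open, so `H(K)` meets
its frontier only inside `K`, and a point of `J⁺(x)`, `J⁻(x)` or `J*(x)` in `K` forces nearby
points into `A(K)`, `R(K)` or both, which makes a dissonant point a limit of points of `H(K)`.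
Conversely, the orbits of points of `H(K)` converging to `x` accumulate on the compact set `K`
in both time directions, which produces the required points of `J⁺(x)`, `J⁻(x)` or `J*(x)`
in `K`. -/

section LimitSets

variable [TopologicalSpace M] (φ : Flow ℝ M)

theorem mem_omegaLim_iff {x z : M} : z ∈ omegaLim φ x ↔ MapClusterPt z atTop (φ · x) := by
  simp only [omegaLim, mapClusterPt_iff_frequently, frequently_atTop, mem_iInter, mem_Ioi,
    mem_closure_iff_nhds]
  constructor
  · intro h U hU a
    obtain ⟨-, hyU, s, hs, rfl⟩ := h (max a 1) (by positivity) U hU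
    exact ⟨s, le_of_max_le_left hs, hyU⟩
  · intro h t _ U hU
    obtain ⟨s, hs, hsU⟩ := h U hU t
    exact ⟨_, hsU, s, hs, rfl⟩

theorem mem_alphaLim_iff {x z : M} : z ∈ alphaLim φ x ↔ MapClusterPt z atBot (φ · x) := by
  simp only [alphaLim, mapClusterPt_iff_frequently, frequently_atBot, mem_iInter, mem_Iio,
    mem_closure_iff_nhds]
  constructor
  · intro h U hU a
    obtain ⟨-, hyU, s, hs, rfl⟩ := h (min a (-1)) (by simp) U hU
    exact ⟨s, le_of_le_min_left hs, hyU⟩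
  · intro h t _ U hU
    obtain ⟨s, hs, hsU⟩ := h U hU t
    exact ⟨_, hsU, s, hs, rfl⟩

end LimitSets

section Reversal

variable [TopologicalSpace M] (φ : Flow ℝ M)

theorem Flow.reverse_reverse : φ.reverse.reverse = φ :=
  Flow.ext fun t x => by simp

theorem posOrbit_reverse (x : M) : posOrbit φ.reverse x = negOrbit φ x := by
  ext y
  constructor
  · rintro ⟨t, ht, rfl⟩
    exact ⟨-t, by linarith, rfl⟩
  · rintro ⟨t, ht, rfl⟩
    exact ⟨-t, by linarith, by simp⟩

theorem negOrbit_reverse (x : M) : negOrbit φ.reverse x = posOrbit φ x := by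
  simpa [Flow.reverse_reverse] using (posOrbit_reverse φ.reverse x).symm

theorem omegaLim_reverse (x : M) : omegaLim φ.reverse x = alphaLim φ x := by
  ext z
  rw [mem_omegaLim_iff, mem_alphaLim_iff, MapClusterPt, MapClusterPt, ← Filter.map_neg_atTop,
    Filter.map_map]
  rfl

theorem Aset_reverse (K : Set M) : Aset φ.reverse K = Rset φ K := by
  ext x
  simp only [Aset, Rset, omegaLim_reverse]

theorem Jplus_reverse (x : M) : Jplus φ.reverse x = Jminus φ x := by
  ext y
  constructor
  · rintro ⟨xs, ts, hxs, hts, hy⟩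
    exact ⟨xs, fun n => -ts n, hxs, tendsto_neg_atTop_atBot.comp hts, hy⟩
  · rintro ⟨xs, ts, hxs, hts, hy⟩
    exact ⟨xs, fun n => -ts n, hxs, tendsto_neg_atBot_atTop.comp hts, by simpa using hy⟩

variable {φ} {K : Set M}

theorem IsIsolatedInv.reverse (h : IsIsolatedInv φ K) : IsIsolatedInv φ.reverse K := by
  obtain ⟨hK, hinv, N, hN, hKN, hmax⟩ := h
  exact ⟨hK, fun x hx t => hinv x hx (-t), N, hN, hKN,
    fun x hx hN' => hmax x hx fun t => by simpa using hN' (-t)⟩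

theorem NonSaddle.reverse (h : NonSaddle φ K) : NonSaddle φ.reverse K := by
  intro U hU
  obtain ⟨V, hKV, hVU, hdich⟩ := h U hU
  refine ⟨V, hKV, hVU, fun x hx => ?_⟩
  rw [posOrbit_reverse, negOrbit_reverse]
  exact (hdich x hx).symm

end Reversal

theorem Dissonant.notMem_Hset [TopologicalSpace M] {φ : Flow ℝ M} {K : Set M} {x : M}
    (hD : Dissonant φ K x) : x ∉ Hset φ K := by
  rcases hD with ⟨-, hxA, -⟩ | ⟨-, hxR, -⟩ | ⟨hxI, -⟩
  · exact fun h => hxA h.1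
  · exact fun h => hxR h.2
  · exact fun h => hxI (Or.inl h.1)

section Trapping

variable [TopologicalSpace M] [T2Space M] {φ : Flow ℝ M} {K : Set M}

theorem mem_Aset_of_eventually_mem {N C : Set M}
    (hmax : ∀ x ∈ N, (∀ t : ℝ, φ t x ∈ N) → x ∈ K) (hC : IsCompact C) (hCN : C ⊆ N)
    {x : M} (h : ∀ᶠ t in atTop, φ t x ∈ C) : x ∈ Aset φ K := by
  have hω : omegaLim φ x = omegaLimit atTop φ {x} := by
    ext z
    rw [mem_omegaLim_iff, mem_omegaLimit_singleton_iff_mapClusterPt]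
  have hclosure : closure (image2 φ {t | φ t x ∈ C} {x}) ⊆ C :=
    closure_minimal (image2_subset_iff.2 fun t ht _ hy => hy ▸ ht) hC.isClosed
  have hωC : omegaLimit atTop φ {x} ⊆ C :=
    (omegaLimit_subset_closure_image2 _ _ _ h).trans hclosure
  have hinv := Flow.isInvariant_omegaLimit atTop φ {x} fun t =>
    tendsto_atTop_add_const_left _ t tendsto_id
  rw [Aset, mem_ofPred_eq, hω]
  exact ⟨nonempty_omegaLimit_of_isCompact_absorbing _ _ _ hC ⟨_, h, hclosure⟩
    (singleton_nonempty x), fun w hw => hmax w (hCN (hωC hw)) fun t => hCN (hωC (hinv t hw))⟩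

theorem IsIsolatedInv.subset_Aset (h : IsIsolatedInv φ K) : K ⊆ Aset φ K := by
  obtain ⟨hK, hinv, N, -, hKN, hmax⟩ := h
  exact fun x hx => mem_Aset_of_eventually_mem hmax hK (hKN.trans interior_subset)
    (Eventually.of_forall (hinv x hx))

theorem IsIsolatedInv.subset_Hset (h : IsIsolatedInv φ K) : K ⊆ Hset φ K :=
  fun _ hx => ⟨h.subset_Aset hx, by simpa [Aset_reverse] using h.reverse.subset_Aset hx⟩

theorem NonSaddle.exists_isOpen_eventually_mem_Aset (hNS : NonSaddle φ K)
    (hIso : IsIsolatedInv φ K) {x : M} (hx : x ∉ K) : ∃ V, IsOpen V ∧ K ⊆ V ∧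
      ∀ᶠ y in 𝓝 x, ∀ t : ℝ, 0 ≤ t → φ t y ∈ V → y ∈ Aset φ K := by
  obtain ⟨hK, -, N, hN, hKN, hmax⟩ := hIso
  obtain ⟨P, Q, hP, hQ, hKP, hxQ, hPQ⟩ :=
    SeparatedNhds.of_isCompact_isCompact hK isCompact_singleton (disjoint_singleton_right.2 hx)
  have hKU : K ⊆ interior (N \ Q) := fun k hk =>
    interior_mono (inter_subset_inter_right _ hPQ.subset_compl_right) <| by
      rw [interior_inter, hP.interior_eq]; exact ⟨hKN hk, hKP hk⟩
  obtain ⟨V, hKV, hVU, hdich⟩ := hNS _ hKU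
  refine ⟨interior V, isOpen_interior, hKV, mem_of_superset (hQ.mem_nhds (hxQ rfl)) ?_⟩
  intro y hyQ t ht hyV
  have hy : y ∈ negOrbit φ (φ t y) :=
    ⟨-t, by linarith, by rw [← Flow.map_add, neg_add_cancel, Flow.map_zero_apply]⟩
  have hpos : posOrbit φ (φ t y) ⊆ N \ Q :=
    (hdich _ (interior_subset hyV)).resolve_right fun hneg => (hneg hy).2 hyQ
  refine mem_Aset_of_eventually_mem hmax (hN.diff hQ) sdiff_subset ?_
  filter_upwards [eventually_ge_atTop t] with s hs
  exact hpos ⟨s - t, by linarith, by rw [← Flow.map_add, sub_add_cancel]⟩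

end Trapping

section NonSaddle

variable [TopologicalSpace M] [T2Space M] {φ : Flow ℝ M} {K : Set M} {x : M}

theorem NonSaddle.Aset_mem_nhds (hNS : NonSaddle φ K) (hIso : IsIsolatedInv φ K)
    (hx : x ∈ Aset φ K) (hxK : x ∉ K) : Aset φ K ∈ 𝓝 x := by
  obtain ⟨V, hV, hKV, hev⟩ := hNS.exists_isOpen_eventually_mem_Aset hIso hxK
  obtain ⟨z, hz⟩ := hx.1
  obtain ⟨T, hTV, hT⟩ := (((mem_omegaLim_iff φ).1 hz).frequently
    (hV.mem_nhds (hKV (hx.2 hz)))).and_eventually (eventually_ge_atTop 0) |>.exists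
  have hcont : Continuous fun y => φ T y := φ.continuous continuous_const continuous_id
  filter_upwards [hev, hcont.continuousAt.preimage_mem_nhds (hV.mem_nhds hTV)] with y hy hyV
  exact hy T hT hyV

theorem NonSaddle.Rset_mem_nhds (hNS : NonSaddle φ K) (hIso : IsIsolatedInv φ K)
    (hx : x ∈ Rset φ K) (hxK : x ∉ K) : Rset φ K ∈ 𝓝 x := by
  simpa [Aset_reverse] using hNS.reverse.Aset_mem_nhds hIso.reverse (by rwa [Aset_reverse]) hxK

theorem NonSaddle.Hset_mem_nhds (hNS : NonSaddle φ K) (hIso : IsIsolatedInv φ K)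
    (hx : x ∈ Hset φ K) (hxK : x ∉ K) : Hset φ K ∈ 𝓝 x :=
  inter_mem (hNS.Aset_mem_nhds hIso hx.1 hxK) (hNS.Rset_mem_nhds hIso hx.2 hxK)

variable {ι : Type*} {l : Filter ι} {xs : ι → M} {ts : ι → ℝ} {k : M}

theorem NonSaddle.eventually_mem_Aset (hNS : NonSaddle φ K) (hIso : IsIsolatedInv φ K)
    (hxK : x ∉ K) (hk : k ∈ K) (hxs : Tendsto xs l (𝓝 x)) (hts : Tendsto ts l atTop)
    (hφ : Tendsto (fun i => φ (ts i) (xs i)) l (𝓝 k)) : ∀ᶠ i in l, xs i ∈ Aset φ K := by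
  obtain ⟨V, hV, hKV, hev⟩ := hNS.exists_isOpen_eventually_mem_Aset hIso hxK
  filter_upwards [hxs hev, hts.eventually_ge_atTop 0, hφ (hV.mem_nhds (hKV hk))] with i hi h0 hiV
  exact hi _ h0 hiV

theorem NonSaddle.eventually_mem_Rset (hNS : NonSaddle φ K) (hIso : IsIsolatedInv φ K)
    (hxK : x ∉ K) (hk : k ∈ K) (hxs : Tendsto xs l (𝓝 x)) (hts : Tendsto ts l atBot)
    (hφ : Tendsto (fun i => φ (ts i) (xs i)) l (𝓝 k)) : ∀ᶠ i in l, xs i ∈ Rset φ K := by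
  simpa [Aset_reverse] using hNS.reverse.eventually_mem_Aset hIso.reverse hxK hk hxs
    (tendsto_neg_atBot_atTop.comp hts) (by simpa using hφ)

theorem Dissonant.mem_closure_Hset (hD : Dissonant φ K x) (hIso : IsIsolatedInv φ K)
    (hNS : NonSaddle φ K) (hxK : x ∉ K) : x ∈ closure (Hset φ K) := by
  rcases hD with ⟨hxI, hxA, k, ⟨xs, ts, hxs, hts, hφ⟩, hk⟩ |
    ⟨hxI, hxR, k, ⟨xs, ts, hxs, hts, hφ⟩, hk⟩ |
    ⟨-, ⟨k, k'⟩, ⟨xs, ts, ss, hxs, hts, hss, hφ, hφ'⟩, hk, hk'⟩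
  · refine mem_closure_of_tendsto hxs ?_
    filter_upwards [hNS.eventually_mem_Aset hIso hxK hk hxs hts hφ,
      hxs (hNS.Rset_mem_nhds hIso (hxI.resolve_left hxA) hxK)] with n hA hR
    exact ⟨hA, hR⟩
  · refine mem_closure_of_tendsto hxs ?_
    filter_upwards [hxs (hNS.Aset_mem_nhds hIso (hxI.resolve_right hxR) hxK),
      hNS.eventually_mem_Rset hIso hxK hk hxs hts hφ] with n hA hR
    exact ⟨hA, hR⟩
  · refine mem_closure_of_tendsto hxs ?_
    filter_upwards [hNS.eventually_mem_Aset hIso hxK hk hxs hts hφ,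
      hNS.eventually_mem_Rset hIso hxK hk' hxs hss hφ'] with n hA hR
    exact ⟨hA, hR⟩

end NonSaddle

section Prolongation

variable [MetricSpace M] {φ : Flow ℝ M} {K : Set M} {x : M} {h : ℕ → M}

theorem exists_tendsto_dist_zero_of_mem_Aset (hA : ∀ n, h n ∈ Aset φ K) :
    ∃ (ts : ℕ → ℝ) (zs : ℕ → M), Tendsto ts atTop atTop ∧ (∀ n, zs n ∈ K) ∧
      Tendsto (fun n => dist (zs n) (φ (ts n) (h n))) atTop (𝓝 0) := by
  have hnear (n : ℕ) :
      ∃ t : ℝ, ∃ z ∈ K, (n : ℝ) ≤ t ∧ dist z (φ t (h n)) < 1 / (n + 1) := by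
    obtain ⟨z, hz⟩ := (hA n).1
    obtain ⟨t, hdist, ht⟩ := (((mem_omegaLim_iff φ).1 hz).frequently
      (Metric.ball_mem_nhds z Nat.one_div_pos_of_nat)).and_eventually
      (eventually_ge_atTop (n : ℝ)) |>.exists
    exact ⟨t, z, (hA n).2 hz, ht, Metric.mem_ball'.1 hdist⟩
  choose ts zs hzK hts hd using hnear
  exact ⟨ts, zs, tendsto_atTop_mono hts tendsto_natCast_atTop_atTop, hzK,
    squeeze_zero (fun _ => dist_nonneg) (fun n => (hd n).le)
      tendsto_one_div_add_atTop_nhds_zero_nat⟩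

theorem exists_tendsto_dist_zero_of_mem_Rset (hR : ∀ n, h n ∈ Rset φ K) :
    ∃ (ts : ℕ → ℝ) (zs : ℕ → M), Tendsto ts atTop atBot ∧ (∀ n, zs n ∈ K) ∧
      Tendsto (fun n => dist (zs n) (φ (ts n) (h n))) atTop (𝓝 0) := by
  obtain ⟨ts, zs, hts, hzK, hd⟩ :=
    exists_tendsto_dist_zero_of_mem_Aset (φ := φ.reverse) (by simpa [Aset_reverse] using hR)
  exact ⟨fun n => -ts n, zs, tendsto_neg_atTop_atBot.comp hts, hzK, by simpa using hd⟩

theorem Jplus_inter_nonempty (hK : IsCompact K) (hlim : Tendsto h atTop (𝓝 x))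
    (hA : ∀ n, h n ∈ Aset φ K) : (Jplus φ x ∩ K).Nonempty := by
  obtain ⟨ts, zs, hts, hzK, hd⟩ := exists_tendsto_dist_zero_of_mem_Aset hA
  obtain ⟨z, hz, g, hg, hzg⟩ := hK.tendsto_subseq hzK
  have hg' := hg.tendsto_atTop
  exact ⟨z, ⟨h ∘ g, ts ∘ g, hlim.comp hg', hts.comp hg',
    hzg.congr_dist (hd.comp hg')⟩, hz⟩

theorem Jminus_inter_nonempty (hK : IsCompact K) (hlim : Tendsto h atTop (𝓝 x))
    (hR : ∀ n, h n ∈ Rset φ K) : (Jminus φ x ∩ K).Nonempty := by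
  rw [← Jplus_reverse]
  exact Jplus_inter_nonempty hK hlim (by simpa [Aset_reverse] using hR)

theorem Jstar_inter_nonempty (hK : IsCompact K) (hlim : Tendsto h atTop (𝓝 x))
    (hH : ∀ n, h n ∈ Hset φ K) : (Jstar φ x ∩ K ×ˢ K).Nonempty := by
  obtain ⟨ts, zs, hts, hzK, hd⟩ := exists_tendsto_dist_zero_of_mem_Aset fun n => (hH n).1
  obtain ⟨ss, ws, hss, hwK, hd'⟩ := exists_tendsto_dist_zero_of_mem_Rset fun n => (hH n).2
  obtain ⟨⟨z, w⟩, ⟨hz, hw⟩, g, hg, hzwg⟩ :=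
    (hK.prod hK).tendsto_subseq (x := fun n => (zs n, ws n)) fun n => ⟨hzK n, hwK n⟩
  have hg' := hg.tendsto_atTop
  exact ⟨(z, w), ⟨h ∘ g, ts ∘ g, ss ∘ g, hlim.comp hg', hts.comp hg', hss.comp hg',
    hzwg.fst_nhds.congr_dist (hd.comp hg'),
    hzwg.snd_nhds.congr_dist (hd'.comp hg')⟩, hz, hw⟩

theorem dissonant_of_mem_frontier_Hset (hIso : IsIsolatedInv φ K) (hNS : NonSaddle φ K)
    (hxK : x ∉ K) (hx : x ∈ frontier (Hset φ K)) : Dissonant φ K x := by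
  have hxH : x ∉ Hset φ K := fun h =>
    hx.2 (mem_interior_iff_mem_nhds.2 (hNS.Hset_mem_nhds hIso h hxK))
  obtain ⟨h, hH, hlim⟩ := mem_closure_iff_seq_limit.1 hx.1
  by_cases hxA : x ∈ Aset φ K
  · exact Or.inr (Or.inl ⟨Or.inl hxA, fun hxR => hxH ⟨hxA, hxR⟩,
      Jminus_inter_nonempty hIso.1 hlim fun n => (hH n).2⟩)
  by_cases hxR : x ∈ Rset φ K
  · exact Or.inl ⟨Or.inr hxR, hxA, Jplus_inter_nonempty hIso.1 hlim fun n => (hH n).1⟩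
  · exact Or.inr (Or.inr ⟨fun h => h.elim hxA hxR, Jstar_inter_nonempty hIso.1 hlim hH⟩)

end Prolongation

theorem stmt12_general {M : Type*} [MetricSpace M]
    (φ : Flow ℝ M) (K : Set M)
    (hIso : IsIsolatedInv φ K) (hNS : NonSaddle φ K) :
    (∀ x ∉ K, (Dissonant φ K x ↔ x ∈ frontier (Hset φ K))) ∧
    closure (Hset φ K) = Hset φ K ∪ {x | Dissonant φ K x} := by
  have hiff : ∀ x ∉ K, (Dissonant φ K x ↔ x ∈ frontier (Hset φ K)) := fun x hxK =>
    ⟨fun hD => ⟨hD.mem_closure_Hset hIso hNS hxK,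
      fun h => hD.notMem_Hset (interior_subset h)⟩,
      dissonant_of_mem_frontier_Hset hIso hNS hxK⟩
  refine ⟨hiff, ?_⟩
  rw [closure_eq_self_union_frontier]
  ext x
  by_cases hxK : x ∈ K
  · simp [hIso.subset_Hset hxK]
  · rw [mem_union, mem_union, mem_ofPred_eq, hiff x hxK]

/-- a point `x ∉ K` is dissonant iff it lies in the boundary of `H(K)`;
consequently `closure H(K) = H(K) ∪ D`. -/
theorem stmt12 {M : Type*} [MetricSpace M] [LocallyCompactSpace M]
    (φ : Flow ℝ M) (K : Set M)
    (hIso : IsIsolatedInv φ K) (hNS : NonSaddle φ K) :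
    (∀ x ∉ K, (Dissonant φ K x ↔ x ∈ frontier (Hset φ K))) ∧
    closure (Hset φ K) = Hset φ K ∪ {x | Dissonant φ K x} :=
  stmt12_general φ K hIso hNS
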